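/- Let G be a graph with Δ(G) ≥ 6 and L a list assignment with |L(v)| ≥ Δ(G) + 3. Suppose u is a degree-4 vertex all of whose four neighbors v₁, v₂, v₃, v₄ have degree 2, and the 1-path through v₄ ends at a vertex x with d(x) ≤ Δ(G) − 1. If G − {u, v₁, v₂, v₃, v₄} admits a 2-distance L-coloring, then G admits a 2-distance L-coloring. -/

import Mathlib

open SimpleGraph

/-- Maximum average degree: the supremum over all nonempty subgraphs `H` of `2|E(H)|/|V(H)|`. -/
noncomputable def mad {V : Type} [Fintype V] (G : SimpleGraph V) : ℝ :=
  sSup {x : ℝ | ∃ H : G.Subgraph, H.verts.Nonempty ∧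
    x = 2 * H.edgeSet.ncard / H.verts.ncard}

/-- Two distinct vertices are at distance at most 2. -/
def TwoDistAdj {V : Type} (G : SimpleGraph V) (u v : V) : Prop :=
  u ≠ v ∧ (G.Adj u v ∨ ∃ w, G.Adj u w ∧ G.Adj w v)

/-- `φ` is a 2-distance coloring of `G` from the lists `L`: each vertex gets a color from
its list and vertices at distance at most 2 get distinct colors. -/
def IsTwoDistListColoring {V : Type} (G : SimpleGraph V) (L : V → Finset ℕ) (φ : V → ℕ) :
    Prop :=
  (∀ v, φ v ∈ L v) ∧ ∀ u v, TwoDistAdj G u v → φ u ≠ φ v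

/-!
Color `v₁, v₂, v₃, v₄, u` greedily in this order. The given coloring of `G - {u, v₁, v₂, v₃, v₄}`
is already a partial 2-distance coloring of `G`, because each removed vertex has at most one
neighbor outside the removed set. When `vᵢ` is colored, its colored vertices at distance at most 2
are its other neighbor `wᵢ`, the other neighbors of `wᵢ`, and `v₁, …, vᵢ₋₁`: at most `Δ + 2` of
them, where `i = 4` needs `d(x) ≤ Δ - 1`. Finally `u` sees at most the 8 vertices `vᵢ`, `w₁, w₂, w₃`
and `x`, and `8 ≤ Δ + 2`. Lists of size `Δ + 3` always leave a free color.
-/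

theorem TwoDistAdj.symm {V : Type} {G : SimpleGraph V} {a b : V} (h : TwoDistAdj G a b) :
    TwoDistAdj G b a := by
  obtain ⟨hne, hadj | ⟨m, ham, hmb⟩⟩ := h
  exacts [⟨hne.symm, .inl hadj.symm⟩, ⟨hne.symm, .inr ⟨m, hmb.symm, ham.symm⟩⟩]

namespace SimpleGraph

variable {V : Type} [Fintype V] {G : SimpleGraph V} [DecidableRel G.Adj]

theorem neighborFinset_eq_of_subset_of_degree_le {v : V} {s : Finset V}
    (h : s ⊆ G.neighborFinset v) (hs : G.degree v ≤ s.card) : G.neighborFinset v = s :=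
  (Finset.eq_of_subset_of_card_le h (by rwa [card_neighborFinset_eq_degree])).symm

variable [DecidableEq V]

theorem neighborFinset_eq_pair {u v w : V} (hv : G.degree v = 2) (hu : G.Adj v u)
    (hw : G.Adj v w) (huw : u ≠ w) : G.neighborFinset v = {u, w} :=
  neighborFinset_eq_of_subset_of_degree_le (by simp [Finset.insert_subset_iff, hu, hw])
    (by rw [hv, Finset.card_pair huw])

theorem exists_neighborFinset_eq_pair {u v : V} (hv : G.degree v = 2) (hu : G.Adj v u) :
    ∃ w, G.neighborFinset v = {u, w} := by
  have hmem : u ∈ G.neighborFinset v := (G.mem_neighborFinset v u).mpr hu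
  obtain ⟨w, hw⟩ : ∃ w, (G.neighborFinset v).erase u = {w} := Finset.card_eq_one.mp <| by
    rw [Finset.card_erase_of_mem hmem, card_neighborFinset_eq_degree, hv]
  exact ⟨w, by rw [← Finset.insert_erase hmem, hw]⟩

variable (G) in
def twoDistNeighborFinset (v : V) : Finset V :=
  (G.neighborFinset v).biUnion fun w => insert w ((G.neighborFinset w).erase v)

theorem mem_twoDistNeighborFinset {v w : V} :
    w ∈ G.twoDistNeighborFinset v ↔ TwoDistAdj G v w := by
  simp only [twoDistNeighborFinset, Finset.mem_biUnion, mem_neighborFinset, Finset.mem_insert,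
    Finset.mem_erase, TwoDistAdj]
  constructor
  · rintro ⟨m, hvm, rfl | ⟨hwv, hmw⟩⟩
    exacts [⟨hvm.ne, .inl hvm⟩, ⟨Ne.symm hwv, .inr ⟨m, hvm, hmw⟩⟩]
  · rintro ⟨hvw, hadj | ⟨m, hvm, hmw⟩⟩
    exacts [⟨w, hadj, .inl rfl⟩, ⟨m, hvm, .inr ⟨Ne.symm hvw, hmw⟩⟩]

theorem card_insert_erase_neighborFinset_le {v w : V} (h : G.Adj v w) :
    (insert w ((G.neighborFinset w).erase v)).card ≤ G.degree w := by
  have hv : v ∈ G.neighborFinset w := (G.mem_neighborFinset w v).mpr h.symm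
  have hpos : 0 < G.degree w := (G.degree_pos_iff_exists_adj w).mpr ⟨v, h.symm⟩
  calc (insert w ((G.neighborFinset w).erase v)).card
      ≤ ((G.neighborFinset w).erase v).card + 1 := Finset.card_insert_le _ _
    _ = G.degree w := by
      rw [Finset.card_erase_of_mem hv, card_neighborFinset_eq_degree]; omega

theorem card_twoDistNeighborFinset_le {v : V} {d : ℕ}
    (h : ∀ w ∈ G.neighborFinset v, G.degree w ≤ d) :
    (G.twoDistNeighborFinset v).card ≤ G.degree v * d := calc
  _ ≤ ∑ w ∈ G.neighborFinset v, G.degree w :=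
    Finset.card_biUnion_le.trans <| Finset.sum_le_sum fun _ hw =>
      card_insert_erase_neighborFinset_le ((G.mem_neighborFinset _ _).mp hw)
  _ ≤ G.degree v * d := by
    simpa [card_neighborFinset_eq_degree] using Finset.sum_le_card_nsmul _ _ _ h

theorem card_twoDistNeighborFinset_sdiff_le {S : Finset V} {u v w : V}
    (hN : G.neighborFinset v = {u, w}) (hu : u ∈ S) :
    (G.twoDistNeighborFinset v \ S).card ≤
      (G.neighborFinset u \ insert v S).card + G.degree w := by
  have hvw : G.Adj v w := (G.mem_neighborFinset v w).mp (by simp [hN])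
  rw [twoDistNeighborFinset, hN, Finset.biUnion_insert, Finset.singleton_biUnion,
    Finset.union_sdiff_distrib, Finset.insert_sdiff_of_mem _ hu, Finset.sdiff_insert,
    ← Finset.erase_sdiff_comm]
  exact (Finset.card_union_le _ _).trans <| Nat.add_le_add_left
    ((Finset.card_le_card Finset.sdiff_subset).trans (card_insert_erase_neighborFinset_le hvw)) _

end SimpleGraph

/-- `φ` is a 2-distance `L`-coloring of the vertices outside `S`; those of `S` are still to be
colored. -/
def IsTwoDistListColoringOff {V : Type} (G : SimpleGraph V) (L : V → Finset ℕ) (S : Finset V)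
    (φ : V → ℕ) : Prop :=
  (∀ v ∉ S, φ v ∈ L v) ∧ ∀ a b, a ∉ S → b ∉ S → TwoDistAdj G a b → φ a ≠ φ b

theorem isTwoDistListColoringOff_empty_iff {V : Type} {G : SimpleGraph V} {L : V → Finset ℕ}
    {φ : V → ℕ} : IsTwoDistListColoringOff G L ∅ φ ↔ IsTwoDistListColoring G L φ := by
  simp [IsTwoDistListColoringOff, IsTwoDistListColoring]

section

variable {V : Type} [Fintype V] [DecidableEq V] {G : SimpleGraph V} [DecidableRel G.Adj]
  {L : V → Finset ℕ}

theorem IsTwoDistListColoring.exists_off_of_induce {s : Set V} {S : Finset V}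
    (hs : ∀ y, y ∈ s ↔ y ∉ S) (hS : ∀ m ∈ S, ∃ w, G.neighborFinset m ⊆ insert w S)
    {φ : s → ℕ} (hφ : IsTwoDistListColoring (G.induce s) (fun y => L y.1) φ) :
    ∃ ψ, IsTwoDistListColoringOff G L S ψ := by
  classical
  refine ⟨fun y => if h : y ∈ s then φ ⟨y, h⟩ else 0, fun y hy => ?_, fun a b ha hb hab => ?_⟩
  · simpa [(hs y).mpr hy] using hφ.1 ⟨y, (hs y).mpr hy⟩
  · simp only [(hs a).mpr ha, (hs b).mpr hb, dite_true]
    refine hφ.2 _ _ ⟨fun h => hab.1 (congrArg Subtype.val h), ?_⟩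
    obtain ⟨hne, hadj | ⟨m, ham, hmb⟩⟩ := hab
    · exact .inl hadj
    by_cases hm : m ∈ s
    · exact .inr ⟨⟨m, hm⟩, ham, hmb⟩
    -- `m ∈ S` has at most one neighbor outside `S`, so `a = b`
    obtain ⟨w, hw⟩ := hS m (by simpa [hs] using hm)
    have ha' := hw ((G.mem_neighborFinset m a).mpr ham.symm)
    have hb' := hw ((G.mem_neighborFinset m b).mpr hmb)
    simp only [Finset.mem_insert, ha, hb, or_false] at ha' hb'
    exact absurd (ha'.trans hb'.symm) hne

theorem IsTwoDistListColoringOff.extend {S : Finset V} {v : V} {φ : V → ℕ}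
    (hφ : IsTwoDistListColoringOff G L (insert v S) φ)
    (hv : (G.twoDistNeighborFinset v \ S).card < (L v).card) :
    ∃ ψ, IsTwoDistListColoringOff G L S ψ := by
  obtain ⟨c, hcL, hc⟩ := Finset.exists_mem_notMem_of_card_lt_card
    (Finset.card_image_le.trans_lt hv)
  have hfresh : ∀ b ∉ S, TwoDistAdj G v b → Function.update φ v c b ≠ c := by
    intro b hb hvb
    rw [Function.update_of_ne hvb.1.symm]
    exact fun h => hc (Finset.mem_image.mpr
      ⟨b, Finset.mem_sdiff.mpr ⟨mem_twoDistNeighborFinset.mpr hvb, hb⟩, h⟩)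
  refine ⟨Function.update φ v c, fun y hy => ?_, fun a b ha hb hab => ?_⟩
  · rcases eq_or_ne y v with rfl | hyv
    · rwa [Function.update_self]
    · rw [Function.update_of_ne hyv]
      exact hφ.1 y (by simp [hy, hyv])
  rcases eq_or_ne a v with rfl | hav
  · rw [Function.update_self]; exact (hfresh b hb hab).symm
  rcases eq_or_ne b v with rfl | hbv
  · rw [Function.update_self]; exact hfresh a ha hab.symm
  rw [Function.update_of_ne hav, Function.update_of_ne hbv]
  exact hφ.2 a b (by simp [ha, hav]) (by simp [hb, hbv]) hab

theorem IsTwoDistListColoringOff.extend_of_neighborFinset_eq_pair {S P : Finset V} {u v w : V}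
    {φ : V → ℕ} (hφ : IsTwoDistListColoringOff G L (insert v S) φ)
    (hN : G.neighborFinset v = {u, w}) (hu : u ∈ S) (hP : G.neighborFinset u ⊆ insert v S ∪ P)
    (hv : P.card + G.degree w < (L v).card) :
    ∃ ψ, IsTwoDistListColoringOff G L S ψ :=
  hφ.extend <| (card_twoDistNeighborFinset_sdiff_le hN hu).trans_lt <|
    (Nat.add_le_add_right (Finset.card_le_card (sdiff_le_iff.mpr hP)) _).trans_lt hv

theorem IsTwoDistListColoringOff.exists_isTwoDistListColoring {v : V} {φ : V → ℕ}
    (hφ : IsTwoDistListColoringOff G L {v} φ)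
    (hv : (G.twoDistNeighborFinset v).card < (L v).card) :
    ∃ ψ, IsTwoDistListColoring G L ψ := by
  obtain ⟨ψ, hψ⟩ := (Finset.insert_empty (a := v) ▸ hφ).extend
    ((Finset.card_le_card Finset.sdiff_subset).trans_lt hv)
  exact ⟨ψ, isTwoDistListColoringOff_empty_iff.mp hψ⟩

end

/-- If `Δ(G) ≥ 6`, lists have size at least `Δ(G) + 3`, `u` is a 4-vertex all of whose
neighbors `v₁, v₂, v₃, v₄` have degree 2, and the 1-path through `v₄` ends at `x` with
`d(x) ≤ Δ(G) − 1`, then any 2-distance list coloring of `G − {u, v₁, v₂, v₃, v₄}`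
extends to `G`. -/
theorem extend_coloring_1111_vertex
    {V : Type} [Fintype V] [DecidableEq V] (G : SimpleGraph V) [DecidableRel G.Adj]
    (hΔ : 6 ≤ G.maxDegree)
    (L : V → Finset ℕ) (hL : ∀ y, G.maxDegree + 3 ≤ (L y).card)
    (u v₁ v₂ v₃ v₄ x : V) (hdu : G.degree u = 4)
    (h1 : G.Adj u v₁) (h2 : G.Adj u v₂) (h3 : G.Adj u v₃) (h4 : G.Adj u v₄)
    (h12 : v₁ ≠ v₂) (h13 : v₁ ≠ v₃) (h14 : v₁ ≠ v₄)
    (h23 : v₂ ≠ v₃) (h24 : v₂ ≠ v₄) (h34 : v₃ ≠ v₄)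
    (hd1 : G.degree v₁ = 2) (hd2 : G.degree v₂ = 2)
    (hd3 : G.degree v₃ = 2) (hd4 : G.degree v₄ = 2)
    (hwx : G.Adj v₄ x) (hxu : x ≠ u) (hdx : G.degree x ≤ G.maxDegree - 1)
    (hcol : ∃ φ, IsTwoDistListColoring
      (G.induce {y | y ≠ u ∧ y ≠ v₁ ∧ y ≠ v₂ ∧ y ≠ v₃ ∧ y ≠ v₄})
      (fun y => L y.1) φ) :
    ∃ φ : V → ℕ, IsTwoDistListColoring G L φ := by
  obtain ⟨φ, hφ⟩ := hcol
  obtain ⟨w₁, hN₁⟩ := exists_neighborFinset_eq_pair hd1 h1.symm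
  obtain ⟨w₂, hN₂⟩ := exists_neighborFinset_eq_pair hd2 h2.symm
  obtain ⟨w₃, hN₃⟩ := exists_neighborFinset_eq_pair hd3 h3.symm
  have hN₄ := neighborFinset_eq_pair hd4 h4.symm hwx hxu.symm
  have hNu : G.neighborFinset u = {v₁, v₂, v₃, v₄} :=
    neighborFinset_eq_of_subset_of_degree_le (by simp [Finset.insert_subset_iff, *])
      (by rw [hdu, Finset.card_eq_four.mpr ⟨v₁, v₂, v₃, v₄, h12, h13, h14, h23, h24, h34, rfl⟩])
  have hΔ₁ := G.degree_le_maxDegree w₁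
  have hΔ₂ := G.degree_le_maxDegree w₂
  have hΔ₃ := G.degree_le_maxDegree w₃
  have hL₁ := hL v₁; have hL₂ := hL v₂; have hL₃ := hL v₃; have hL₄ := hL v₄; have hLu := hL u
  obtain ⟨φ₀, hφ₀⟩ := hφ.exists_off_of_induce (S := {v₁, v₂, v₃, v₄, u}) (by simp; tauto) (by
    simp only [Finset.forall_mem_insert, Finset.mem_singleton, forall_eq]
    refine ⟨⟨w₁, ?_⟩, ⟨w₂, ?_⟩, ⟨w₃, ?_⟩, ⟨x, ?_⟩, ⟨u, ?_⟩⟩ <;>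
      simp [hN₁, hN₂, hN₃, hN₄, hNu, Finset.insert_subset_iff])
  obtain ⟨φ₁, hφ₁⟩ := hφ₀.extend_of_neighborFinset_eq_pair hN₁ (by simp) (P := ∅)
    (by simp [hNu, Finset.insert_subset_iff]) (by rw [Finset.card_empty]; omega)
  obtain ⟨φ₂, hφ₂⟩ := hφ₁.extend_of_neighborFinset_eq_pair hN₂ (by simp) (P := {v₁})
    (by simp [hNu, Finset.insert_subset_iff]) (by rw [Finset.card_singleton]; omega)
  obtain ⟨φ₃, hφ₃⟩ := hφ₂.extend_of_neighborFinset_eq_pair hN₃ (by simp) (P := {v₁, v₂})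
    (by simp [hNu, Finset.insert_subset_iff])
    (by have := Finset.card_le_two (a := v₁) (b := v₂); omega)
  obtain ⟨φ₄, hφ₄⟩ := hφ₃.extend_of_neighborFinset_eq_pair hN₄ (by simp) (P := {v₁, v₂, v₃})
    (by simp [hNu, Finset.insert_subset_iff])
    (by have := Finset.card_le_three (a := v₁) (b := v₂) (c := v₃); omega)
  exact hφ₄.exists_isTwoDistListColoring <| (card_twoDistNeighborFinset_le (d := 2)
    (by simp [hNu, hd1, hd2, hd3, hd4])).trans_lt (by rw [hdu]; omega)
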